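/- Let A ∈ ℂ^{N×N} be Hermitian positive definite with extremal eigenvalues λ_min ≤ λ_max, let b ∈ ℂ^N, and let f(z) = ∫₀^∞ (z+t)^{-1} dμ(t) be a Stieltjes function (μ a nonnegative measure). Let V_m span the Krylov space K_m(A,b), let U span an augmentation space, and let f_m be the augmented FOM approximant built from the orthonormalized basis of span([V_m, U]) via f_m = 𝐕 f(𝐕* A 𝐕) 𝐕* b. Then ‖f(A)b − f_m‖_A ≤ ∫₀^∞ sqrt(λ_max/(λ_max+t)) · ‖e_m(t)‖_{A+tI} dμ(t), where e_m(t) is the error of the standard (non-augmented) FOM approximant for (A+tI)x = b from K_m(A,b). -/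

import Mathlib

/-!
For each `t ≥ 0` the augmented approximant of `(A + tI)⁻¹ b` is its Galerkin approximation from
`span(Vb)`, a space containing the FOM iterate `xm t`, so its `(A + tI)`-energy error is at most
that of `xm t`. Since `A ≤ λmax`, the `A`-norm is at most `√(λmax / (λmax + t))` times the
`(A + tI)`-norm. Finally the `A`-norm is a Euclidean norm after a change of variables
`v ↦ B v` with `A = Bᴴ B`, so it passes under the Stieltjes integral by the triangle inequality.
-/

open Matrix MeasureTheory ComplexOrder

namespace Matrix

variable {𝕜 n r : Type*} [RCLike 𝕜] [Fintype n] [Fintype r]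

noncomputable def energyNorm (A : Matrix n n 𝕜) (v : n → 𝕜) : ℝ :=
  √(RCLike.re (star v ⬝ᵥ A *ᵥ v))

open scoped MatrixOrder in
lemma IsHermitian.re_dotProduct_mulVec_le [DecidableEq n] {A : Matrix n n 𝕜}
    (hA : A.IsHermitian) {l : ℝ} (hl : ∀ i, hA.eigenvalues i ≤ l) (v : n → 𝕜) :
    RCLike.re (star v ⬝ᵥ A *ᵥ v) ≤ l * RCLike.re (star v ⬝ᵥ v) := by
  have hle : A ≤ algebraMap ℝ _ l := by
    rw [le_algebraMap_iff_spectrum_le hA.isSelfAdjoint, hA.spectrum_real_eq_range_eigenvalues]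
    rintro _ ⟨i, rfl⟩
    exact hl i
  have := (le_iff.1 hle).re_dotProduct_nonneg v
  rw [Algebra.algebraMap_eq_smul_one, sub_mulVec, dotProduct_sub, map_sub, smul_mulVec, one_mulVec,
    dotProduct_smul] at this
  simpa [sub_nonneg, RCLike.smul_re] using this

lemma IsHermitian.energyNorm_le_sqrt_mul_energyNorm_add_smul_one [DecidableEq n]
    {A : Matrix n n 𝕜} (hA : A.IsHermitian) {l t : ℝ} (hl : ∀ i, hA.eigenvalues i ≤ l)
    (hl0 : 0 < l) (ht : 0 ≤ t) (v : n → 𝕜) :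
    energyNorm A v ≤ √(l / (l + t)) * energyNorm (A + (t : 𝕜) • 1) v := by
  have hRayleigh := hA.re_dotProduct_mulVec_le hl v
  have hshift : RCLike.re (star v ⬝ᵥ (A + (t : 𝕜) • 1) *ᵥ v)
      = RCLike.re (star v ⬝ᵥ A *ᵥ v) + t * RCLike.re (star v ⬝ᵥ v) := by
    rw [add_mulVec, dotProduct_add, map_add, smul_mulVec, one_mulVec, dotProduct_smul, smul_eq_mul,
      RCLike.re_ofReal_mul]
  rw [energyNorm, energyNorm, ← Real.sqrt_mul (by positivity), hshift]
  refine Real.sqrt_le_sqrt ?_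
  rw [div_mul_eq_mul_div, le_div_iff₀ (by positivity)]
  nlinarith [mul_le_mul_of_nonneg_left hRayleigh ht]

lemma IsHermitian.re_dotProduct_add_of_orthogonal {B : Matrix n n 𝕜} (hB : B.IsHermitian)
    {x y : n → 𝕜} (h : star y ⬝ᵥ B *ᵥ x = 0) :
    RCLike.re (star (x + y) ⬝ᵥ B *ᵥ (x + y))
      = RCLike.re (star x ⬝ᵥ B *ᵥ x) + RCLike.re (star y ⬝ᵥ B *ᵥ y) := by
  have h' : star x ⬝ᵥ B *ᵥ y = star (star y ⬝ᵥ B *ᵥ x) := by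
    rw [star_dotProduct, star_mulVec, hB.eq, ← dotProduct_mulVec]
  simp only [star_add, mulVec_add, add_dotProduct, dotProduct_add, h, h', star_zero, add_zero,
    zero_add, map_add]

open scoped MatrixOrder in
lemma PosSemidef.exists_energyNorm_eq_norm [DecidableEq n] {A : Matrix n n 𝕜}
    (hA : A.PosSemidef) : ∃ B : Matrix n n 𝕜, ∀ v, energyNorm A v = ‖WithLp.toLp 2 (B *ᵥ v)‖ := by
  obtain ⟨B, rfl⟩ := CStarAlgebra.nonneg_iff_eq_star_mul_self.mp hA.nonneg
  refine ⟨B, fun v => ?_⟩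
  rw [energyNorm, norm_eq_sqrt_re_inner (𝕜 := 𝕜), EuclideanSpace.inner_toLp_toLp,
    dotProduct_comm (B *ᵥ v), star_mulVec, ← dotProduct_mulVec, mulVec_mulVec, star_eq_conjTranspose]

lemma PosSemidef.energyNorm_integral_le [DecidableEq n] {α : Type*} [MeasurableSpace α]
    {μ : Measure α} {A : Matrix n n 𝕜} (hA : A.PosSemidef) (g : α → n → 𝕜) :
    energyNorm A (∫ x, g x ∂μ) ≤ ∫ x, energyNorm A (g x) ∂μ := by
  by_cases hg : Integrable g μ
  · obtain ⟨B, hB⟩ := hA.exists_energyNorm_eq_norm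
    let T : (n → 𝕜) →L[𝕜] EuclideanSpace 𝕜 n :=
      ((WithLp.linearEquiv 2 𝕜 (n → 𝕜)).symm.toLinearMap ∘ₗ B.mulVecLin).toContinuousLinearMap
    simp only [hB]
    calc ‖WithLp.toLp 2 (B *ᵥ ∫ x, g x ∂μ)‖ = ‖∫ x, T (g x) ∂μ‖ := by
          rw [T.integral_comp_comm hg]; rfl
      _ ≤ ∫ x, ‖T (g x)‖ ∂μ := norm_integral_le_integral_norm _
  · rw [integral_undef hg, energyNorm, mulVec_zero, dotProduct_zero, map_zero, Real.sqrt_zero]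
    exact integral_nonneg fun _ => Real.sqrt_nonneg _

lemma integrable_mulVec {α : Type*} [MeasurableSpace α] {μ : Measure α} (M : Matrix n r 𝕜)
    {g : α → r → 𝕜} (hg : Integrable g μ) : Integrable (fun x => M *ᵥ g x) μ :=
  M.mulVecLin.toContinuousLinearMap.integrable_comp hg

lemma integral_mulVec {α : Type*} [MeasurableSpace α] {μ : Measure α} (M : Matrix n r 𝕜)
    {g : α → r → 𝕜} (hg : Integrable g μ) : ∫ x, M *ᵥ g x ∂μ = M *ᵥ ∫ x, g x ∂μ :=
  M.mulVecLin.toContinuousLinearMap.integral_comp_comm hg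

variable [DecidableEq r]

noncomputable def galerkinApprox (B : Matrix n n 𝕜) (V : Matrix n r 𝕜) (b : n → 𝕜) : n → 𝕜 :=
  V *ᵥ ((Vᴴ * B * V)⁻¹ *ᵥ (Vᴴ *ᵥ b))

lemma PosDef.conjTranspose_mulVec_sub_mulVec_galerkinApprox {B : Matrix n n 𝕜} (hB : B.PosDef)
    {V : Matrix n r 𝕜} (hV : Function.Injective V.mulVec) (b : n → 𝕜) :
    Vᴴ *ᵥ (b - B *ᵥ galerkinApprox B V b) = 0 := by
  have hunit : IsUnit (Vᴴ * B * V).det :=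
    (isUnit_iff_isUnit_det _).mp (hB.conjTranspose_mul_mul_same hV).isUnit
  rw [galerkinApprox, mulVec_sub, mulVec_mulVec, mulVec_mulVec, mulVec_mulVec,
    mul_nonsing_inv _ hunit, one_mulVec, sub_self]

lemma PosDef.energyNorm_sub_galerkinApprox_le [DecidableEq n] {B : Matrix n n 𝕜} (hB : B.PosDef)
    {V : Matrix n r 𝕜} (hV : Function.Injective V.mulVec) (b : n → 𝕜) (c : r → 𝕜) :
    energyNorm B (B⁻¹ *ᵥ b - galerkinApprox B V b) ≤ energyNorm B (B⁻¹ *ᵥ b - V *ᵥ c) := by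
  set e := B⁻¹ *ᵥ b - galerkinApprox B V b
  set d := galerkinApprox B V b - V *ᵥ c
  have hBe : B *ᵥ e = b - B *ᵥ galerkinApprox B V b := by
    rw [mulVec_sub, mulVec_mulVec, mul_nonsing_inv _ ((isUnit_iff_isUnit_det B).mp hB.isUnit),
      one_mulVec]
  have horth : star d ⬝ᵥ B *ᵥ e = 0 := by
    rw [show d = V *ᵥ ((Vᴴ * B * V)⁻¹ *ᵥ (Vᴴ *ᵥ b) - c) by rw [mulVec_sub]; rfl, star_mulVec,
      ← dotProduct_mulVec, hBe, hB.conjTranspose_mulVec_sub_mulVec_galerkinApprox hV, dotProduct_zero]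
  rw [← sub_add_sub_cancel (B⁻¹ *ᵥ b) (galerkinApprox B V b), energyNorm, energyNorm,
    hB.isHermitian.re_dotProduct_add_of_orthogonal horth]
  exact Real.sqrt_le_sqrt (le_add_of_nonneg_right (hB.posSemidef.re_dotProduct_nonneg d))

lemma PosDef.energyNorm_sub_galerkinApprox_add_smul_one_le [DecidableEq n] {A : Matrix n n 𝕜}
    (hA : A.PosDef) {l t : ℝ} (hl : ∀ i, hA.isHermitian.eigenvalues i ≤ l) (hl0 : 0 < l)
    (ht : 0 ≤ t) {V : Matrix n r 𝕜} (hV : Function.Injective V.mulVec) (b : n → 𝕜) (c : r → 𝕜) :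
    energyNorm A ((A + (t : 𝕜) • 1)⁻¹ *ᵥ b - galerkinApprox (A + (t : 𝕜) • 1) V b)
      ≤ √(l / (l + t)) * energyNorm (A + (t : 𝕜) • 1) ((A + (t : 𝕜) • 1)⁻¹ *ᵥ b - V *ᵥ c) := by
  have hB : (A + (t : 𝕜) • 1).PosDef :=
    hA.add_posSemidef (PosSemidef.one.smul (RCLike.ofReal_nonneg.mpr ht))
  grw [hA.isHermitian.energyNorm_le_sqrt_mul_energyNorm_add_smul_one hl hl0 ht,
    hB.energyNorm_sub_galerkinApprox_le hV b c]

end Matrix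

theorem stmt_7_general {N m k r : ℕ} (A : Matrix (Fin N) (Fin N) ℂ)
    (hA : A.IsHermitian) (hApd : A.PosDef) (b : Fin N → ℂ)
    (lmax : ℝ) (hlmax : IsGreatest (Set.range hA.eigenvalues) lmax)
    (μ : Measure ℝ)
    (Vm : Matrix (Fin N) (Fin m) ℂ) (U : Matrix (Fin N) (Fin k) ℂ)
    (Vb : Matrix (Fin N) (Fin r) ℂ)
    -- `Vb` is an orthonormal basis of the augmented space span(Vm) + span(U):
    (hVborth : Vbᴴ * Vb = 1)
    (hVbspan : Submodule.span ℂ (Set.range (fun j : Fin r => (fun i => Vb i j))) =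
      Submodule.span ℂ (Set.range (fun j : Fin m => (fun i => Vm i j))) ⊔
        Submodule.span ℂ (Set.range (fun j : Fin k => (fun i => U i j))))
    -- standard (non-augmented) FOM approximants from the Krylov space:
    (xm : ℝ → (Fin N → ℂ))
    (hxm : ∀ t ∈ Set.Ici (0 : ℝ),
      xm t ∈ Submodule.span ℂ (Set.range (fun j : Fin m => (fun i => Vm i j))) ∧
      ∀ s ∈ Submodule.span ℂ (Set.range (fun j : Fin m => (fun i => Vm i j))),
        star s ⬝ᵥ (b - (A + (t : ℂ) • (1 : Matrix (Fin N) (Fin N) ℂ)).mulVec (xm t)) = 0)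
    -- integrability of the quantities involved:
    (hint1 : Integrable (fun t : ℝ =>
      ((A + (t : ℂ) • (1 : Matrix (Fin N) (Fin N) ℂ))⁻¹).mulVec b) (μ.restrict (Set.Ici 0)))
    (hint2 : Integrable (fun t : ℝ =>
      ((Vbᴴ * A * Vb + (t : ℂ) • (1 : Matrix (Fin r) (Fin r) ℂ))⁻¹).mulVec
        (Vbᴴ.mulVec b)) (μ.restrict (Set.Ici 0)))
    (hint3 : Integrable (fun t : ℝ =>
      Real.sqrt (lmax / (lmax + t)) *
        Real.sqrt ((star (((A + (t : ℂ) • (1 : Matrix (Fin N) (Fin N) ℂ))⁻¹).mulVec b - xm t) ⬝ᵥ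
          (A + (t : ℂ) • (1 : Matrix (Fin N) (Fin N) ℂ)).mulVec
            (((A + (t : ℂ) • (1 : Matrix (Fin N) (Fin N) ℂ))⁻¹).mulVec b - xm t)).re))
      (μ.restrict (Set.Ici 0))) :
    Real.sqrt ((star
        ((∫ t in Set.Ici (0 : ℝ),
            ((A + (t : ℂ) • (1 : Matrix (Fin N) (Fin N) ℂ))⁻¹).mulVec b ∂μ) -
          Vb.mulVec (∫ t in Set.Ici (0 : ℝ),
            ((Vbᴴ * A * Vb + (t : ℂ) • (1 : Matrix (Fin r) (Fin r) ℂ))⁻¹).mulVec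
              (Vbᴴ.mulVec b) ∂μ)) ⬝ᵥ
        A.mulVec
        ((∫ t in Set.Ici (0 : ℝ),
            ((A + (t : ℂ) • (1 : Matrix (Fin N) (Fin N) ℂ))⁻¹).mulVec b ∂μ) -
          Vb.mulVec (∫ t in Set.Ici (0 : ℝ),
            ((Vbᴴ * A * Vb + (t : ℂ) • (1 : Matrix (Fin r) (Fin r) ℂ))⁻¹).mulVec
              (Vbᴴ.mulVec b) ∂μ))).re) ≤
      ∫ t in Set.Ici (0 : ℝ),
        Real.sqrt (lmax / (lmax + t)) *
          Real.sqrt ((star (((A + (t : ℂ) • (1 : Matrix (Fin N) (Fin N) ℂ))⁻¹).mulVec b - xm t) ⬝ᵥ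
            (A + (t : ℂ) • (1 : Matrix (Fin N) (Fin N) ℂ)).mulVec
              (((A + (t : ℂ) • (1 : Matrix (Fin N) (Fin N) ℂ))⁻¹).mulVec b - xm t)).re) ∂μ := by
  obtain ⟨i₀, hi₀⟩ := hlmax.1
  have hl0 : 0 < lmax := hi₀ ▸ hApd.eigenvalues_pos i₀
  have hVinj : Function.Injective Vb.mulVec :=
    Function.LeftInverse.injective (g := (Vbᴴ *ᵥ ·)) fun c => by
      dsimp only
      rw [mulVec_mulVec, hVborth, one_mulVec]
  have hreduced (t : ℝ) : Vbᴴ * A * Vb + (t : ℂ) • 1 = Vbᴴ * (A + (t : ℂ) • 1) * Vb := by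
    rw [Matrix.mul_add, Matrix.add_mul, Matrix.mul_smul, Matrix.smul_mul, Matrix.mul_one, hVborth]
  rw [← integral_mulVec Vb hint2, ← integral_sub hint1 (integrable_mulVec Vb hint2)]
  refine (hApd.posSemidef.energyNorm_integral_le _).trans <|
    integral_mono_of_nonneg (.of_forall fun t => Real.sqrt_nonneg _) hint3 ?_
  filter_upwards [ae_restrict_mem measurableSet_Ici] with t ht
  obtain ⟨c, hc⟩ : xm t ∈ LinearMap.range Vb.mulVecLin :=
    (range_mulVecLin Vb).ge (hVbspan.ge (Submodule.mem_sup_left (hxm t ht).1))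
  rw [hreduced, ← hc]
  exact hApd.energyNorm_sub_galerkinApprox_add_smul_one_le (fun i => hlmax.2 ⟨i, rfl⟩) hl0 ht
    hVinj b c

/-- Error bound for the augmented FOM approximant of a Stieltjes matrix function:
the `A`-norm error of the augmented approximant is bounded by the integral of
`sqrt(λmax/(λmax+t))` times the `(A+tI)`-norm error of the standard (non-augmented)
FOM approximant. -/
theorem stmt_7 {N m k r : ℕ} (A : Matrix (Fin N) (Fin N) ℂ)
    (hA : A.IsHermitian) (hApd : A.PosDef) (b : Fin N → ℂ)
    (lmax : ℝ) (hlmax : IsGreatest (Set.range hA.eigenvalues) lmax)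
    (μ : Measure ℝ)
    (Vm : Matrix (Fin N) (Fin m) ℂ) (U : Matrix (Fin N) (Fin k) ℂ)
    (Vb : Matrix (Fin N) (Fin r) ℂ)
    -- `Vm` spans the Krylov space K_m(A, b):
    (hKrylov : Submodule.span ℂ (Set.range (fun j : Fin m => (fun i => Vm i j))) =
      Submodule.span ℂ (Set.range (fun j : Fin m => (A ^ (j : ℕ)).mulVec b)))
    -- `Vb` is an orthonormal basis of the augmented space span(Vm) + span(U):
    (hVborth : Vbᴴ * Vb = 1)
    (hVbspan : Submodule.span ℂ (Set.range (fun j : Fin r => (fun i => Vb i j))) =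
      Submodule.span ℂ (Set.range (fun j : Fin m => (fun i => Vm i j))) ⊔
        Submodule.span ℂ (Set.range (fun j : Fin k => (fun i => U i j))))
    -- standard (non-augmented) FOM approximants from the Krylov space:
    (xm : ℝ → (Fin N → ℂ))
    (hxm : ∀ t ∈ Set.Ici (0 : ℝ),
      xm t ∈ Submodule.span ℂ (Set.range (fun j : Fin m => (fun i => Vm i j))) ∧
      ∀ s ∈ Submodule.span ℂ (Set.range (fun j : Fin m => (fun i => Vm i j))),
        star s ⬝ᵥ (b - (A + (t : ℂ) • (1 : Matrix (Fin N) (Fin N) ℂ)).mulVec (xm t)) = 0)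
    -- integrability of the quantities involved:
    (hint1 : Integrable (fun t : ℝ =>
      ((A + (t : ℂ) • (1 : Matrix (Fin N) (Fin N) ℂ))⁻¹).mulVec b) (μ.restrict (Set.Ici 0)))
    (hint2 : Integrable (fun t : ℝ =>
      ((Vbᴴ * A * Vb + (t : ℂ) • (1 : Matrix (Fin r) (Fin r) ℂ))⁻¹).mulVec
        (Vbᴴ.mulVec b)) (μ.restrict (Set.Ici 0)))
    (hint3 : Integrable (fun t : ℝ =>
      Real.sqrt (lmax / (lmax + t)) *
        Real.sqrt ((star (((A + (t : ℂ) • (1 : Matrix (Fin N) (Fin N) ℂ))⁻¹).mulVec b - xm t) ⬝ᵥ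
          (A + (t : ℂ) • (1 : Matrix (Fin N) (Fin N) ℂ)).mulVec
            (((A + (t : ℂ) • (1 : Matrix (Fin N) (Fin N) ℂ))⁻¹).mulVec b - xm t)).re))
      (μ.restrict (Set.Ici 0))) :
    Real.sqrt ((star
        ((∫ t in Set.Ici (0 : ℝ),
            ((A + (t : ℂ) • (1 : Matrix (Fin N) (Fin N) ℂ))⁻¹).mulVec b ∂μ) -
          Vb.mulVec (∫ t in Set.Ici (0 : ℝ),
            ((Vbᴴ * A * Vb + (t : ℂ) • (1 : Matrix (Fin r) (Fin r) ℂ))⁻¹).mulVec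
              (Vbᴴ.mulVec b) ∂μ)) ⬝ᵥ
        A.mulVec
        ((∫ t in Set.Ici (0 : ℝ),
            ((A + (t : ℂ) • (1 : Matrix (Fin N) (Fin N) ℂ))⁻¹).mulVec b ∂μ) -
          Vb.mulVec (∫ t in Set.Ici (0 : ℝ),
            ((Vbᴴ * A * Vb + (t : ℂ) • (1 : Matrix (Fin r) (Fin r) ℂ))⁻¹).mulVec
              (Vbᴴ.mulVec b) ∂μ))).re) ≤
      ∫ t in Set.Ici (0 : ℝ),
        Real.sqrt (lmax / (lmax + t)) *
          Real.sqrt ((star (((A + (t : ℂ) • (1 : Matrix (Fin N) (Fin N) ℂ))⁻¹).mulVec b - xm t) ⬝ᵥ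
            (A + (t : ℂ) • (1 : Matrix (Fin N) (Fin N) ℂ)).mulVec
              (((A + (t : ℂ) • (1 : Matrix (Fin N) (Fin N) ℂ))⁻¹).mulVec b - xm t)).re) ∂μ :=
  stmt_7_general A hA hApd b lmax hlmax μ Vm U Vb hVborth hVbspan xm hxm hint1 hint2 hint3
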